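/- Let F be an aperiodic probability distribution on Z^d with log-Laplace transform φ. Then the interior of the convex hull of the support of F is non-empty, and for any compact set K contained in the interior of dom(φ), the determinant of the covariance matrix Σ_θ of the tilted law P_θ is bounded away from zero uniformly in θ ∈ K: inf_{θ∈K} |Σ_θ| > 0. -/

import Mathlib

/-!
Differences of support points generate `ℤ^d`, hence span `ℝ^d`, so the support lies in no affine
hyperplane. This gives an interior point of the convex hull, and it makes every tilted covariance
`Σ_θ = ∑ₓ p_θ(x) (x - m_θ)(x - m_θ)ᵀ` positive definite. On `I_F` every moment of polynomial
growth is continuous in `θ`: near `θ₀` the summands are dominated by a finite sum of Laplace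
summands taken at the corners of a small cube around `θ₀`. Hence `θ ↦ det Σ_θ` is continuous and
positive on the compact set `K`, and attains a positive minimum there.
-/

open Matrix Set Filter
open scoped ENNReal Pointwise

section WeightedSums

variable {α : Type*} {p : α → ℝ}

theorem hasSum_mul_sub_mul_sub {X Y : α → ℝ} {z μX μY μXY : ℝ} (hp : HasSum p z)
    (hX : HasSum (fun a => p a * X a) μX) (hY : HasSum (fun a => p a * Y a) μY)
    (hXY : HasSum (fun a => p a * (X a * Y a)) μXY) (c d : ℝ) :
    HasSum (fun a => p a * ((X a - c) * (Y a - d))) (μXY - d * μX - c * μY + c * d * z) :=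
  (((hXY.sub (hX.mul_left d)).sub (hY.mul_left c)).add (hp.mul_left (c * d))).congr_fun
    fun a => by ring

theorem posDef_of_tsum_mul_mul {ι : Type*} [Fintype ι] {X : α → ι → ℝ} (hp : ∀ a, 0 ≤ p a)
    (hsum : ∀ i j, Summable fun a => p a * (X a i * X a j))
    (hX : ∀ v : ι → ℝ, v ≠ 0 → ∃ a, 0 < p a ∧ v ⬝ᵥ X a ≠ 0) :
    (Matrix.of fun i j => ∑' a, p a * (X a i * X a j)).PosDef := by
  refine .of_dotProduct_mulVec_pos (Matrix.ext fun i j => by simp [mul_comm]) fun v hv => ?_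
  have hquad : HasSum (fun a => p a * (v ⬝ᵥ X a) ^ 2)
      (∑ i, ∑ j, v i * ((∑' a, p a * (X a i * X a j)) * v j)) :=
    (hasSum_sum fun i _ => hasSum_sum fun j _ =>
      ((hsum i j).hasSum.mul_right (v j)).mul_left (v i)).congr_fun fun a => by
      rw [dotProduct, sq, Finset.sum_mul_sum, Finset.mul_sum]
      refine Finset.sum_congr rfl fun i _ => ?_
      rw [Finset.mul_sum]
      exact Finset.sum_congr rfl fun j _ => by ring
  obtain ⟨a, hpa, hva⟩ := hX v hv
  simp only [star_trivial, dotProduct, mulVec, of_apply, Finset.mul_sum]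
  rw [← hquad.tsum_eq]
  exact hquad.summable.tsum_pos (fun b => mul_nonneg (hp b) (sq_nonneg _)) a
    (mul_pos hpa (pow_pos (abs_pos.2 hva) 2 |>.trans_eq (sq_abs _)))

end WeightedSums

theorem AddMonoidHom.mem_vectorSpan_image_of_closure_sub_eq_top {k G V : Type*} [Ring k]
    [AddCommGroup G] [AddCommGroup V] [Module k V] (f : G →+ V) {S : Set G}
    (hS : AddSubgroup.closure (S - S) = ⊤) (x : G) : f x ∈ vectorSpan k (f '' S) := by
  have : AddSubgroup.closure (S - S) ≤ (vectorSpan k (f '' S)).toAddSubgroup.comap f := by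
    rw [AddSubgroup.closure_le]
    rintro _ ⟨u, hu, v, hv, rfl⟩
    simpa using vsub_mem_vectorSpan k (mem_image_of_mem f hu) (mem_image_of_mem f hv)
  exact this (hS ▸ AddSubgroup.mem_top x)

theorem vectorSpan_intCast_image_eq_top {ι : Type*} [Fintype ι] {S : Set (ι → ℤ)}
    (hS : AddSubgroup.closure (S - S) = ⊤) :
    vectorSpan ℝ ((fun x i => (x i : ℝ)) '' S) = ⊤ := by
  classical
  refine eq_top_iff.2 ((Pi.basisFun ℝ ι).span_eq ▸ Submodule.span_le.2 ?_)
  rintro _ ⟨j, rfl⟩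
  have hcast : (Int.castAddHom ℝ).compLeft ι (Pi.single j 1) = Pi.single j 1 := by
    ext i
    simp [Pi.single_apply]
  have h := ((Int.castAddHom ℝ).compLeft ι).mem_vectorSpan_image_of_closure_sub_eq_top
    (k := ℝ) hS (Pi.single j 1)
  rw [hcast] at h
  exact h

theorem interior_convexHull_nonempty_of_vectorSpan_eq_top {V : Type*} [NormedAddCommGroup V]
    [NormedSpace ℝ V] [FiniteDimensional ℝ V] {s : Set V} (hne : s.Nonempty)
    (hs : vectorSpan ℝ s = ⊤) : (interior (convexHull ℝ s)).Nonempty :=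
  interior_convexHull_nonempty_iff_affineSpan_eq_top.2
    ((AffineSubspace.affineSpan_eq_top_iff_vectorSpan_eq_top_of_nonempty ℝ V V hne).2 hs)

theorem exists_dotProduct_sub_ne_zero {ι : Type*} [Fintype ι] {s : Set (ι → ℝ)}
    (hs : vectorSpan ℝ s = ⊤) {v : ι → ℝ} (hv : v ≠ 0) (c : ι → ℝ) :
    ∃ y ∈ s, v ⬝ᵥ (y - c) ≠ 0 := by
  by_contra! h
  have hker : vectorSpan ℝ s ≤ LinearMap.ker (dotProductBilin ℝ ℝ v) := by
    rw [vectorSpan_def, Submodule.span_le]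
    rintro _ ⟨y, hy, z, hz, rfl⟩
    have hyz := congr_arg₂ (· - ·) (h y hy) (h z hz)
    simpa [dotProduct_sub] using hyz
  exact hv (dotProduct_self_eq_zero.1 (hker (hs ▸ Submodule.mem_top)))

theorem pow_le_factorial_div_pow_mul_exp {t ε : ℝ} (ht : 0 ≤ t) (hε : 0 < ε) (n : ℕ) :
    t ^ n ≤ n.factorial / ε ^ n * Real.exp (ε * t) := by
  have h := Real.pow_div_factorial_le_exp (ε * t) (by positivity) n
  rw [div_le_iff₀ (by positivity), mul_pow] at h
  rw [div_mul_eq_mul_div, le_div_iff₀ (by positivity)]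
  linarith

section ExponentialMoments

variable {ι : Type*} [Fintype ι]

noncomputable def laplace (F : (ι → ℤ) → ℝ) (θ : ι → ℝ) : ℝ≥0∞ :=
  ∑' x, ENNReal.ofReal (F x * Real.exp (∑ i, θ i * x i))

noncomputable def expMoment (F q : (ι → ℤ) → ℝ) (θ : ι → ℝ) : ℝ :=
  ∑' x, F x * Real.exp (∑ i, θ i * x i) * q x

theorem abs_intCast_le_sum_abs (x : ι → ℤ) (j : ι) : |(x j : ℝ)| ≤ (∑ i, |(x i : ℝ)|) ^ 1 := by
  rw [pow_one]
  exact Finset.single_le_sum (f := fun i => |(x i : ℝ)|) (fun _ _ => abs_nonneg _)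
    (Finset.mem_univ j)

theorem abs_intCast_mul_le_sum_abs_sq (x : ι → ℤ) (i j : ι) :
    |(x i : ℝ) * x j| ≤ (∑ k, |(x k : ℝ)|) ^ 2 := by
  rw [abs_mul, sq]
  exact mul_le_mul (by simpa using abs_intCast_le_sum_abs x i)
    (by simpa using abs_intCast_le_sum_abs x j) (abs_nonneg _)
    (Finset.sum_nonneg fun _ _ => abs_nonneg _)

theorem sum_mul_le_add_mul_sum_abs {θ θ₀ : ι → ℝ} {r : ℝ} (h : dist θ θ₀ ≤ r) (y : ι → ℝ) :
    ∑ i, θ i * y i ≤ ∑ i, θ₀ i * y i + r * ∑ i, |y i| := by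
  rw [Finset.mul_sum, ← Finset.sum_add_distrib]
  refine Finset.sum_le_sum fun i _ => ?_
  have hi : |θ i - θ₀ i| ≤ r := by simpa [Real.dist_eq] using (dist_le_pi_dist θ θ₀ i).trans h
  have := (le_abs_self _).trans ((abs_mul (θ i - θ₀ i) (y i)).trans_le
    (mul_le_mul_of_nonneg_right hi (abs_nonneg _)))
  linarith

variable {F : (ι → ℤ) → ℝ}

theorem summable_of_laplace_ne_top (hF0 : ∀ x, 0 ≤ F x) {θ : ι → ℝ} (h : laplace F θ ≠ ⊤) :
    Summable fun x => F x * Real.exp (∑ i, θ i * x i) := by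
  simpa [ENNReal.toReal_ofReal (mul_nonneg (hF0 _) (Real.exp_pos _).le)] using
    ENNReal.summable_toReal h

variable [DecidableEq ι]

theorem exp_add_mul_sum_abs_le_sum_sign (θ₀ y : ι → ℝ) (r : ℝ) :
    Real.exp (∑ i, θ₀ i * y i + r * ∑ i, |y i|) ≤
      ∑ s : ι → SignType, Real.exp (∑ i, (θ₀ i + r * s i) * y i) := by
  have hsign : ∑ i, θ₀ i * y i + r * ∑ i, |y i| =
      ∑ i, (θ₀ i + r * SignType.sign (y i)) * y i := by
    rw [Finset.mul_sum, ← Finset.sum_add_distrib]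
    exact Finset.sum_congr rfl fun i _ => by rw [← sign_mul_self (y i)]; ring
  rw [hsign]
  exact Finset.single_le_sum (f := fun s : ι → SignType => Real.exp (∑ i, (θ₀ i + r * s i) * y i))
    (fun _ _ => (Real.exp_pos _).le) (Finset.mem_univ fun i => SignType.sign (y i))

theorem norm_mul_exp_mul_le (hF0 : ∀ x, 0 ≤ F x) {θ θ₀ : ι → ℝ} {ε : ℝ} (hε : 0 < ε)
    (hθ : dist θ θ₀ ≤ ε) {q : (ι → ℤ) → ℝ} {n : ℕ} (hq : ∀ x, |q x| ≤ (∑ i, |(x i : ℝ)|) ^ n)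
    (x : ι → ℤ) :
    ‖F x * Real.exp (∑ i, θ i * x i) * q x‖ ≤
      n.factorial / ε ^ n *
        ∑ s : ι → SignType, F x * Real.exp (∑ i, (θ₀ i + 2 * ε * s i) * x i) := by
  have hFx := hF0 x
  have hw : 0 ≤ F x * Real.exp (∑ i, θ i * x i) := mul_nonneg hFx (Real.exp_pos _).le
  set t := ∑ i, |(x i : ℝ)|
  calc ‖F x * Real.exp (∑ i, θ i * x i) * q x‖
      = F x * Real.exp (∑ i, θ i * x i) * |q x| := by
        rw [Real.norm_eq_abs, abs_mul, abs_of_nonneg hw]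
    _ ≤ F x * Real.exp (∑ i, θ i * x i) * (n.factorial / ε ^ n * Real.exp (ε * t)) := by
        gcongr
        exact (hq x).trans (pow_le_factorial_div_pow_mul_exp (by positivity) hε n)
    _ = n.factorial / ε ^ n * (F x * Real.exp (∑ i, θ i * x i + ε * t)) := by
        rw [Real.exp_add]; ring
    _ ≤ n.factorial / ε ^ n * (F x * Real.exp (∑ i, θ₀ i * x i + 2 * ε * t)) := by
        gcongr _ * (_ * Real.exp ?_)
        linarith [sum_mul_le_add_mul_sum_abs hθ fun i => (x i : ℝ)]
    _ ≤ n.factorial / ε ^ n *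
          (F x * ∑ s : ι → SignType, Real.exp (∑ i, (θ₀ i + 2 * ε * s i) * x i)) := by
        have hexp := exp_add_mul_sum_abs_le_sum_sign θ₀ (fun i => (x i : ℝ)) (2 * ε)
        gcongr ?_ * (_ * ?_)
    _ = _ := by rw [Finset.mul_sum]

theorem exists_summable_bound_of_mem_interior (hF0 : ∀ x, 0 ≤ F x) {θ₀ : ι → ℝ}
    (hθ₀ : θ₀ ∈ interior {θ | laplace F θ ≠ ⊤}) {q : (ι → ℤ) → ℝ} {n : ℕ}
    (hq : ∀ x, |q x| ≤ (∑ i, |(x i : ℝ)|) ^ n) :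
    ∃ ε > 0, ∃ u : (ι → ℤ) → ℝ, Summable u ∧ ∀ θ ∈ Metric.closedBall θ₀ ε, ∀ x,
      ‖F x * Real.exp (∑ i, θ i * x i) * q x‖ ≤ u x := by
  obtain ⟨r, hr, hball⟩ :=
    Metric.nhds_basis_closedBall.mem_iff.1 (mem_interior_iff_mem_nhds.1 hθ₀)
  have hcorner (s : ι → SignType) :
      Summable fun x => F x * Real.exp (∑ i, (θ₀ i + 2 * (r / 2) * s i) * x i) := by
    refine summable_of_laplace_ne_top hF0 (hball ?_)
    refine (dist_pi_le_iff hr.le).2 fun i => ?_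
    have hs : |(s i : ℝ)| ≤ 1 := by cases s i <;> simp
    have hr2 : 2 * (r / 2) = r := by ring
    simpa [Real.dist_eq, abs_mul, abs_of_pos hr, hr2] using mul_le_mul_of_nonneg_left hs hr.le
  exact ⟨r / 2, by positivity, _, (summable_sum fun s _ => hcorner s).mul_left _,
    fun θ hθ => norm_mul_exp_mul_le hF0 (by positivity) hθ hq⟩

theorem summable_mul_exp_mul_of_mem_interior (hF0 : ∀ x, 0 ≤ F x) {θ : ι → ℝ}
    (hθ : θ ∈ interior {θ | laplace F θ ≠ ⊤}) {q : (ι → ℤ) → ℝ} {n : ℕ}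
    (hq : ∀ x, |q x| ≤ (∑ i, |(x i : ℝ)|) ^ n) :
    Summable fun x => F x * Real.exp (∑ i, θ i * x i) * q x := by
  obtain ⟨ε, hε, u, hu, hbound⟩ := exists_summable_bound_of_mem_interior hF0 hθ hq
  exact .of_norm_bounded hu (hbound θ (Metric.mem_closedBall_self hε.le))

theorem continuousAt_expMoment (hF0 : ∀ x, 0 ≤ F x) {θ₀ : ι → ℝ}
    (hθ₀ : θ₀ ∈ interior {θ | laplace F θ ≠ ⊤}) {q : (ι → ℤ) → ℝ} {n : ℕ}
    (hq : ∀ x, |q x| ≤ (∑ i, |(x i : ℝ)|) ^ n) :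
    ContinuousAt (expMoment F q) θ₀ := by
  obtain ⟨ε, hε, u, hu, hbound⟩ := exists_summable_bound_of_mem_interior hF0 hθ₀ hq
  refine (continuousOn_tsum (fun x => ?_) hu fun x θ hθ => hbound θ hθ x).continuousAt
    (Metric.closedBall_mem_nhds θ₀ hε)
  fun_prop

end ExponentialMoments

section TiltedLaw

variable {ι : Type*} [Fintype ι]

noncomputable def logLaplace (F : (ι → ℤ) → ℝ) (θ : ι → ℝ) : ℝ :=
  Real.log (laplace F θ).toReal

noncomputable def tiltedWeight (F : (ι → ℤ) → ℝ) (θ : ι → ℝ) (x : ι → ℤ) : ℝ :=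
  F x * Real.exp ((∑ i, θ i * x i) - logLaplace F θ)

noncomputable def tiltedMean (F : (ι → ℤ) → ℝ) (θ : ι → ℝ) : ι → ℝ :=
  fun j => ∑' x, tiltedWeight F θ x * x j

noncomputable def tiltedCov (F : (ι → ℤ) → ℝ) (θ : ι → ℝ) : Matrix ι ι ℝ :=
  Matrix.of fun i j =>
    ∑' x, tiltedWeight F θ x * (((x i : ℝ) - tiltedMean F θ i) * ((x j : ℝ) - tiltedMean F θ j))

variable {F : (ι → ℤ) → ℝ}

theorem exp_logLaplace (hF0 : ∀ x, 0 ≤ F x) {x₀ : ι → ℤ} (hx₀ : 0 < F x₀) {θ : ι → ℝ}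
    (hθ : Summable fun x => F x * Real.exp (∑ i, θ i * x i)) :
    Real.exp (logLaplace F θ) = expMoment F 1 θ := by
  have hpos : 0 < ∑' x, F x * Real.exp (∑ i, θ i * x i) :=
    hθ.tsum_pos (fun x => mul_nonneg (hF0 x) (Real.exp_pos _).le) x₀
      (mul_pos hx₀ (Real.exp_pos _))
  rw [logLaplace, laplace, ← ENNReal.ofReal_tsum_of_nonneg
    (fun x => mul_nonneg (hF0 x) (Real.exp_pos _).le) hθ, ENNReal.toReal_ofReal hpos.le,
    Real.exp_log hpos]
  simp [expMoment]

variable [DecidableEq ι]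

theorem summable_tiltedWeight_mul (hF0 : ∀ x, 0 ≤ F x) {θ : ι → ℝ}
    (hθ : θ ∈ interior {θ | laplace F θ ≠ ⊤}) {q : (ι → ℤ) → ℝ} {n : ℕ}
    (hq : ∀ x, |q x| ≤ (∑ i, |(x i : ℝ)|) ^ n) :
    Summable fun x => tiltedWeight F θ x * q x :=
  ((summable_mul_exp_mul_of_mem_interior hF0 hθ hq).mul_right
    (Real.exp (-logLaplace F θ))).congr fun x => by
    rw [tiltedWeight, sub_eq_add_neg, Real.exp_add]; ring

theorem hasSum_tiltedWeight_mul (hF0 : ∀ x, 0 ≤ F x) {x₀ : ι → ℤ} (hx₀ : 0 < F x₀) {θ : ι → ℝ}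
    (hθ : θ ∈ interior {θ | laplace F θ ≠ ⊤}) {q : (ι → ℤ) → ℝ} {n : ℕ}
    (hq : ∀ x, |q x| ≤ (∑ i, |(x i : ℝ)|) ^ n) :
    HasSum (fun x => tiltedWeight F θ x * q x) (expMoment F q θ / expMoment F 1 θ) := by
  have hZ := exp_logLaplace hF0 hx₀ (summable_of_laplace_ne_top hF0 (interior_subset hθ))
  refine ((summable_mul_exp_mul_of_mem_interior hF0 hθ hq).hasSum.div_const _).congr_fun
    fun x => ?_
  rw [tiltedWeight, Real.exp_sub, hZ]
  ring

theorem tiltedCov_eq_of_mem_interior (hF0 : ∀ x, 0 ≤ F x) {x₀ : ι → ℤ} (hx₀ : 0 < F x₀)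
    {θ : ι → ℝ} (hθ : θ ∈ interior {θ | laplace F θ ≠ ⊤}) :
    tiltedCov F θ = Matrix.of fun i j =>
      expMoment F (fun x => x i * x j) θ / expMoment F 1 θ -
        expMoment F (fun x => x i) θ / expMoment F 1 θ *
          (expMoment F (fun x => x j) θ / expMoment F 1 θ) := by
  have hZ : expMoment F 1 θ ≠ 0 := by
    rw [← exp_logLaplace hF0 hx₀ (summable_of_laplace_ne_top hF0 (interior_subset hθ))]
    exact (Real.exp_pos _).ne'
  have hp : HasSum (tiltedWeight F θ) 1 := by
    simpa [div_self hZ] using hasSum_tiltedWeight_mul hF0 hx₀ hθ (q := 1) (n := 0) (by simp)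
  have hmean (j : ι) := hasSum_tiltedWeight_mul hF0 hx₀ hθ (abs_intCast_le_sum_abs · j)
  ext i j
  rw [tiltedCov, of_apply, of_apply, ((hasSum_mul_sub_mul_sub hp (hmean i) (hmean j)
    (hasSum_tiltedWeight_mul hF0 hx₀ hθ (abs_intCast_mul_le_sum_abs_sq · i j)) _ _).tsum_eq),
    tiltedMean, tiltedMean, (hmean i).tsum_eq, (hmean j).tsum_eq]
  ring

theorem continuousAt_tiltedCov (hF0 : ∀ x, 0 ≤ F x) {x₀ : ι → ℤ} (hx₀ : 0 < F x₀)
    {θ₀ : ι → ℝ} (hθ₀ : θ₀ ∈ interior {θ | laplace F θ ≠ ⊤}) :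
    ContinuousAt (tiltedCov F) θ₀ := by
  refine ContinuousAt.congr ?_ (eventually_of_mem (isOpen_interior.mem_nhds hθ₀)
    fun θ hθ => (tiltedCov_eq_of_mem_interior hF0 hx₀ hθ).symm)
  have hZ := continuousAt_expMoment hF0 hθ₀ (q := 1) (n := 0) (by simp)
  have hZ0 : expMoment F 1 θ₀ ≠ 0 := by
    rw [← exp_logLaplace hF0 hx₀ (summable_of_laplace_ne_top hF0 (interior_subset hθ₀))]
    exact (Real.exp_pos _).ne'
  have hB (j : ι) := (continuousAt_expMoment hF0 hθ₀ (abs_intCast_le_sum_abs · j)).div hZ hZ0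
  have hA (i j : ι) :=
    (continuousAt_expMoment hF0 hθ₀ (abs_intCast_mul_le_sum_abs_sq · i j)).div hZ hZ0
  exact continuousAt_pi.2 fun i => continuousAt_pi.2 fun j => (hA i j).sub ((hB i).mul (hB j))

theorem posDef_tiltedCov (hF0 : ∀ x, 0 ≤ F x)
    (hspan : vectorSpan ℝ ((fun x i => (x i : ℝ)) '' {x | 0 < F x}) = ⊤) {θ : ι → ℝ}
    (hθ : θ ∈ interior {θ | laplace F θ ≠ ⊤}) :
    (tiltedCov F θ).PosDef := by
  have hp : Summable (tiltedWeight F θ) := by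
    simpa using summable_tiltedWeight_mul hF0 hθ (q := 1) (n := 0) (by simp)
  have hmean (j : ι) := summable_tiltedWeight_mul hF0 hθ (abs_intCast_le_sum_abs · j)
  refine posDef_of_tsum_mul_mul (X := fun x i => (x i : ℝ) - tiltedMean F θ i)
    (fun x => mul_nonneg (hF0 x) (Real.exp_pos _).le) (fun i j => ?_) fun v hv => ?_
  · exact (hasSum_mul_sub_mul_sub hp.hasSum (hmean i).hasSum (hmean j).hasSum
      (summable_tiltedWeight_mul hF0 hθ (abs_intCast_mul_le_sum_abs_sq · i j)).hasSum
      _ _).summable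
  · obtain ⟨_, ⟨x, hx, rfl⟩, hvx⟩ := exists_dotProduct_sub_ne_zero hspan hv (tiltedMean F θ)
    exact ⟨x, mul_pos hx (Real.exp_pos _), hvx⟩

end TiltedLaw

/-- for an aperiodic probability distribution `F` on `ℤ^d`, the
interior of the convex hull of its support is non-empty, and on any compact
subset `K` of the interior of the domain of the log-Laplace transform, the
determinant of the covariance matrix `Σ_θ` of the tilted law is bounded away
from `0` uniformly in `θ ∈ K`. -/
theorem det_tilted_covariance_bounded_below
    (d : ℕ) (F : (Fin d → ℤ) → ℝ)
    (hF0 : ∀ y, 0 ≤ F y) (hF1 : ∑' y, F y = 1)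
    (haper : AddSubgroup.closure
        {z : Fin d → ℤ | ∃ u v, 0 < F u ∧ 0 < F v ∧ z = u - v} = ⊤)
    (L : (Fin d → ℝ) → ℝ≥0∞)
    (hL : ∀ θ, L θ = ∑' x : Fin d → ℤ,
        ENNReal.ofReal (F x * Real.exp (∑ i, θ i * (x i : ℝ))))
    (φ : (Fin d → ℝ) → ℝ) (hφ : ∀ θ, φ θ = Real.log (L θ).toReal)
    (m : (Fin d → ℝ) → (Fin d → ℝ))
    (hm : ∀ θ j, m θ j = ∑' x : Fin d → ℤ,
        F x * Real.exp ((∑ i, θ i * (x i : ℝ)) - φ θ) * (x j : ℝ))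
    (Sig : (Fin d → ℝ) → Matrix (Fin d) (Fin d) ℝ)
    (hSig : ∀ θ i j, Sig θ i j = ∑' x : Fin d → ℤ,
        F x * Real.exp ((∑ i', θ i' * (x i' : ℝ)) - φ θ) *
          (((x i : ℝ) - m θ i) * ((x j : ℝ) - m θ j))) :
    (interior (convexHull ℝ
        ((fun x : Fin d → ℤ => fun i => (x i : ℝ)) '' {x | 0 < F x}))).Nonempty ∧
    (∀ K : Set (Fin d → ℝ), IsCompact K → K ⊆ interior {θ | L θ ≠ ⊤} →
      ∃ ε > 0, ∀ θ ∈ K, ε ≤ (Sig θ).det) := by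
  obtain rfl : L = laplace F := funext hL
  obtain rfl : φ = logLaplace F := funext hφ
  obtain rfl : m = tiltedMean F := funext fun θ => funext (hm θ)
  obtain rfl : Sig = tiltedCov F := funext fun θ => Matrix.ext (hSig θ)
  have hS : AddSubgroup.closure ({x | 0 < F x} - {x | 0 < F x}) = ⊤ := by
    convert haper using 2
    ext z
    simp [Set.mem_sub, eq_comm]
  have hspan := vectorSpan_intCast_image_eq_top hS
  obtain ⟨x₀, hx₀⟩ : ∃ x, 0 < F x := by
    by_contra! h
    simp [funext fun x => le_antisymm (h x) (hF0 x)] at hF1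
  refine ⟨interior_convexHull_nonempty_of_vectorSpan_eq_top ⟨_, mem_image_of_mem _ hx₀⟩ hspan,
    fun K hK hKD => hK.exists_forall_le' (fun θ hθ => ?_) fun θ hθ => ?_⟩
  · exact (continuous_id.matrix_det.continuousAt.comp
      (continuousAt_tiltedCov hF0 hx₀ (hKD hθ))).continuousWithinAt
  · exact (posDef_tiltedCov hF0 hspan (hKD hθ)).det_pos
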